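/- The Bures angle is a metric: on density matrices in M_n(ℂ), the function d(A,B) = arccos(F(A,B)), with F(A,B) = tr|A^{1/2}B^{1/2}|, satisfies the triangle inequality d(A,C) ≤ d(A,B) + d(B,C), is symmetric, and d(A,B) = 0 iff A = B. -/

import Mathlib

open Matrix
open scoped ComplexOrder

noncomputable section

/-- The square root of a positive semidefinite matrix, as `Matrix.PosSemidef.sqrt` was defined
in Mathlib of December 2024 (since removed). -/
def Matrix.PosSemidef.sqrt {𝕜 : Type*} [RCLike 𝕜] {m : Type*} [Fintype m] [DecidableEq m]
    {A : Matrix m m 𝕜} (hA : A.PosSemidef) : Matrix m m 𝕜 :=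
  hA.1.eigenvectorUnitary.1 * diagonal ((↑) ∘ (√·) ∘ hA.1.eigenvalues) *
    (star hA.1.eigenvectorUnitary : Matrix m m 𝕜)

theorem Matrix.PosSemidef.posSemidef_sqrt {𝕜 : Type*} [RCLike 𝕜] {m : Type*} [Fintype m]
    [DecidableEq m] {A : Matrix m m 𝕜} (hA : A.PosSemidef) : PosSemidef hA.sqrt := by
  apply PosSemidef.mul_mul_conjTranspose_same
  refine posSemidef_diagonal_iff.mpr fun i ↦ ?_
  rw [Function.comp_apply, RCLike.nonneg_iff]
  constructor
  · simp only [RCLike.ofReal_re]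
    exact Real.sqrt_nonneg _
  · simp only [Function.comp_apply, RCLike.ofReal_im]

abbrev Mat (n : ℕ) := Matrix (Fin n) (Fin n) ℂ

/-- Apply `φ` entrywise to the `n × n` blocks of an `m·n × m·n` matrix. -/
def blockApply {n k : ℕ} (φ : Mat n →ₗ[ℂ] Mat k) (m : ℕ)
    (M : Matrix (Fin m × Fin n) (Fin m × Fin n) ℂ) :
    Matrix (Fin m × Fin k) (Fin m × Fin k) ℂ :=
  Matrix.of fun p q => φ (Matrix.of fun a b => M (p.1, a) (q.1, b)) p.2 q.2

/-- Complete positivity of a linear map between matrix algebras. -/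
def IsCP {n k : ℕ} (φ : Mat n →ₗ[ℂ] Mat k) : Prop :=
  ∀ (m : ℕ) (M : Matrix (Fin m × Fin n) (Fin m × Fin n) ℂ),
    M.PosSemidef → (blockApply φ m M).PosSemidef

/-- Trace preservation. -/
def IsTP {n k : ℕ} (φ : Mat n →ₗ[ℂ] Mat k) : Prop :=
  ∀ X : Mat n, (φ X).trace = X.trace

/-- The Hilbert–Schmidt adjoint of `φ`, characterized by
`tr (hsAdj φ A * Xᴴ) = tr (A * (φ X)ᴴ)` for all `X`. -/
def hsAdj {n k : ℕ} (φ : Mat n →ₗ[ℂ] Mat k) (A : Mat k) : Mat n :=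
  Matrix.of fun i j => (A * (φ (Matrix.single i j 1))ᴴ).trace

/-- The trace norm `tr |X| = tr ((Xᴴ X)^{1/2})`. -/
def traceNorm {n : ℕ} (X : Mat n) : ℝ :=
  ((Matrix.posSemidef_conjTranspose_mul_self X).sqrt.trace).re


/-- The positive square root of a positive definite matrix. -/
def sqrtPD {n : ℕ} {B : Mat n} (hB : B.PosDef) : Mat n := hB.posSemidef.sqrt

/-- `B^{-1/2}` for a positive definite `B`. -/
def invSqrtPD {n : ℕ} {B : Mat n} (hB : B.PosDef) : Mat n := (sqrtPD hB)⁻¹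

/-- `B^{-1/4}` for a positive definite `B`. -/
def invFourthPD {n : ℕ} {B : Mat n} (hB : B.PosDef) : Mat n :=
  (hB.posSemidef.posSemidef_sqrt.sqrt)⁻¹

/-- The sandwiched 2-Rényi quasi-relative entropy functional
`S₂(A|B) = tr ((B^{-1/4} A B^{-1/4})²)`. -/
def S2 {n : ℕ} (A : Mat n) {B : Mat n} (hB : B.PosDef) : ℝ :=
  (((invFourthPD hB * A * invFourthPD hB) ^ 2).trace).re

/-- The squared Araki–Masuda weighted 2-norm `‖X‖²_{B,2}`. -/
def wNormSq {n : ℕ} (X : Mat n) {B : Mat n} (hB : B.PosDef) : ℝ :=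
  (((invFourthPD hB * X * invFourthPD hB)ᴴ * (invFourthPD hB * X * invFourthPD hB)).trace).re

/-- The Petz recovery map `Y ↦ B^{1/2} φ*(φ(B)^{-1/2} Y φ(B)^{-1/2}) B^{1/2}`. -/
def petz {n k : ℕ} (φ : Mat n →ₗ[ℂ] Mat k) {B : Mat n} (hB : B.PosDef)
    (hφB : (φ B).PosDef) (Y : Mat k) : Mat n :=
  sqrtPD hB * hsAdj φ (invSqrtPD hφB * Y * invSqrtPD hφB) * sqrtPD hB

/-- Squared Frobenius (Hilbert–Schmidt) norm. -/
def frobSq {n : ℕ} (X : Mat n) : ℝ := ((Xᴴ * X).trace).re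

/-- Fidelity `F(A,B) = tr |A^{1/2} B^{1/2}|` of positive semidefinite matrices. -/
def fid {n : ℕ} {A B : Mat n} (hA : A.PosSemidef) (hB : B.PosSemidef) : ℝ :=
  traceNorm (hA.sqrt * hB.sqrt)

/-- The Bures angle `d(A,B) = arccos F(A,B)`. -/
def buresAngle {n : ℕ} {A B : Mat n} (hA : A.PosSemidef) (hB : B.PosSemidef) : ℝ :=
  Real.arccos (fid hA hB)

theorem Matrix.PosSemidef.sqrt_mul_self {n : ℕ} {A : Mat n} (hA : A.PosSemidef) :
    hA.sqrt * hA.sqrt = A := by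
  have hs := hA.1.spectral_theorem
  rw [Unitary.conjStarAlgAut_apply] at hs
  have hUU : (star hA.1.eigenvectorUnitary : Mat n) * (hA.1.eigenvectorUnitary : Mat n) = 1 :=
    Unitary.coe_star_mul_self _
  unfold Matrix.PosSemidef.sqrt
  conv_rhs => rw [hs]
  rw [show (hA.1.eigenvectorUnitary : Mat n) * diagonal ((RCLike.ofReal : ℝ → ℂ) ∘ (√·) ∘ hA.1.eigenvalues) *
      (star hA.1.eigenvectorUnitary : Mat n) * ((hA.1.eigenvectorUnitary : Mat n) *
      diagonal ((RCLike.ofReal : ℝ → ℂ) ∘ (√·) ∘ hA.1.eigenvalues) * (star hA.1.eigenvectorUnitary : Mat n)) =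
      (hA.1.eigenvectorUnitary : Mat n) * (diagonal ((RCLike.ofReal : ℝ → ℂ) ∘ (√·) ∘ hA.1.eigenvalues) *
      ((star hA.1.eigenvectorUnitary : Mat n) * (hA.1.eigenvectorUnitary : Mat n)) *
      diagonal ((RCLike.ofReal : ℝ → ℂ) ∘ (√·) ∘ hA.1.eigenvalues)) * (star hA.1.eigenvectorUnitary : Mat n) by
    simp only [Matrix.mul_assoc], hUU, Matrix.mul_one, diagonal_mul_diagonal]
  congr 3
  funext i
  simp only [Function.comp_apply]
  rw [← RCLike.ofReal_mul, Real.mul_self_sqrt (hA.eigenvalues_nonneg i)]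

namespace BuresAux

open scoped InnerProductSpace

variable {n : ℕ}

/-- A matrix as a Euclidean (Hilbert–Schmidt) vector. -/
def toE (X : Mat n) : EuclideanSpace ℂ (Fin n × Fin n) :=
  WithLp.toLp 2 (fun p : Fin n × Fin n => X p.1 p.2)

lemma toE_inj {X Y : Mat n} (h : toE X = toE Y) : X = Y := by
  ext i j; exact congrArg (fun v => v (i, j)) h

lemma inner_toE (X Y : Mat n) : ⟪toE X, toE Y⟫_ℂ = (Xᴴ * Y).trace := by
  rw [PiLp.inner_apply, Fintype.sum_prod_type]
  simp only [RCLike.inner_apply', toE, WithLp.ofLp_toLp, Matrix.trace, Matrix.diag, Matrix.mul_apply,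
    Matrix.conjTranspose_apply, starRingEnd_apply]
  rw [Finset.sum_comm]

lemma norm_toE_sq (X : Mat n) : ‖toE X‖ ^ 2 = ((Xᴴ * X).trace).re := by
  rw [← inner_toE]
  exact (inner_self_eq_norm_sq (𝕜 := ℂ) (toE X)).symm

lemma norm_toE_eq_one {X : Mat n} (h : ((Xᴴ * X).trace).re = 1) : ‖toE X‖ = 1 := by
  have h2 := norm_toE_sq X
  rw [h] at h2
  nlinarith [norm_nonneg (toE X)]

lemma exists_polar (X : Mat n) :
    ∃ U : Mat n, Uᴴ * U = 1 ∧ X = U * (Matrix.posSemidef_conjTranspose_mul_self X).sqrt := by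
  have hH := Matrix.posSemidef_conjTranspose_mul_self X
  set hHer : (Xᴴ * X).IsHermitian := hH.1 with hHerdef
  set V : Mat n := (hHer.eigenvectorUnitary : Mat n) with hVdef
  have hV1 : Vᴴ * V = 1 := by
    simpa [Matrix.star_eq_conjTranspose] using
      (Matrix.mem_unitaryGroup_iff'.mp hHer.eigenvectorUnitary.2)
  have hV2 : V * Vᴴ = 1 := by
    simpa [Matrix.star_eq_conjTranspose] using
      (Matrix.mem_unitaryGroup_iff.mp hHer.eigenvectorUnitary.2)
  set lam : Fin n → ℝ := hHer.eigenvalues with hlamdef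
  have hlam : ∀ i, 0 ≤ lam i := fun i => hH.eigenvalues_nonneg i
  set Y : Mat n := X * V with hYdef
  have hspec : Xᴴ * X = V * Matrix.diagonal ((↑) ∘ lam) * Vᴴ := by
    simpa [Matrix.star_eq_conjTranspose] using hHer.spectral_theorem
  have hYY : Yᴴ * Y = Matrix.diagonal ((↑) ∘ lam) := by
    have h1 : Yᴴ * Y = Vᴴ * ((Xᴴ * X) * V) := by
      show (X * V)ᴴ * (X * V) = _
      rw [Matrix.conjTranspose_mul]
      simp only [Matrix.mul_assoc]
    rw [h1, hspec, Matrix.mul_assoc, Matrix.mul_assoc, hV1, Matrix.mul_one,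
      ← Matrix.mul_assoc, hV1, Matrix.one_mul]
  set col : Fin n → EuclideanSpace ℂ (Fin n) := fun i => WithLp.toLp 2 (fun r => Y r i) with hcoldef
  have hinner : ∀ i j, ⟪col i, col j⟫_ℂ = Matrix.diagonal ((↑) ∘ lam) i j := by
    intro i j
    rw [← hYY, PiLp.inner_apply]
    simp only [RCLike.inner_apply', hcoldef, WithLp.ofLp_toLp, Matrix.mul_apply, Matrix.conjTranspose_apply,
      starRingEnd_apply]
  set s : Set (Fin n) := {i | lam i ≠ 0} with hsdef
  set w : Fin n → EuclideanSpace ℂ (Fin n) :=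
    fun i => (((Real.sqrt (lam i) : ℝ) : ℂ))⁻¹ • col i with hwdef
  have hortho : Orthonormal ℂ (s.restrict w) := by
    rw [orthonormal_iff_ite]
    intro i j
    simp only [Set.restrict_apply, Set.restrict, hwdef, inner_smul_left, inner_smul_right, hinner]
    rcases eq_or_ne i j with rfl | hij
    · have h0 : lam (i : Fin n) ≠ 0 := i.2
      have hs0 : Real.sqrt (lam (i : Fin n)) ≠ 0 :=
        Real.sqrt_ne_zero'.mpr (lt_of_le_of_ne (hlam _) (Ne.symm h0))
      simp only [Matrix.diagonal_apply_eq, if_pos rfl, Function.comp_apply, map_inv₀,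
        Complex.conj_ofReal]
      rw [← Complex.ofReal_inv, ← Complex.ofReal_mul, ← Complex.ofReal_mul]
      rw [show (Real.sqrt (lam (i:Fin n)))⁻¹ * ((Real.sqrt (lam (i:Fin n)))⁻¹ * lam (i:Fin n)) = 1 by
        rw [← mul_assoc, ← mul_inv, Real.mul_self_sqrt (hlam _), inv_mul_cancel₀ h0]]
      simp
    · have hne : (i : Fin n) ≠ (j : Fin n) := fun h => hij (Subtype.ext h)
      simp [Matrix.diagonal_apply_ne _ hne, if_neg hij]
  have hcard : Module.finrank ℂ (EuclideanSpace ℂ (Fin n)) = Fintype.card (Fin n) := by simp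
  obtain ⟨b, hb⟩ := hortho.exists_orthonormalBasis_extension_of_card_eq hcard
  set W : Mat n := Matrix.of (fun r i => b i r) with hWdef
  have hW : Wᴴ * W = 1 := by
    ext i j
    have h := (orthonormal_iff_ite.mp b.orthonormal) i j
    rw [PiLp.inner_apply] at h
    simp only [RCLike.inner_apply'] at h
    simp only [Matrix.mul_apply, Matrix.conjTranspose_apply, hWdef, Matrix.of_apply,
      Matrix.one_apply, starRingEnd_apply] at h ⊢
    exact h
  set Dsq : Mat n := Matrix.diagonal ((↑) ∘ Real.sqrt ∘ lam) with hDsqdef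
  have hXV : X * V = W * Dsq := by
    ext r i
    rw [hDsqdef, Matrix.mul_diagonal]
    by_cases hi : lam i = 0
    · have h0 : col i = 0 := by
        rw [← inner_self_eq_zero (𝕜 := ℂ), hinner]
        simp [hi]
      have hY0 : Y r i = 0 := congrArg (fun v => v r) h0
      show Y r i = W r i * _
      rw [hY0]
      simp [hi, Real.sqrt_eq_zero']
    · have hbi : b i = w i := hb i hi
      have hWri : W r i = ((Real.sqrt (lam i) : ℂ))⁻¹ * Y r i := by
        rw [hWdef]
        show b i r = _
        rw [hbi, hwdef]
        simp [hcoldef]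
      show Y r i = W r i * _
      rw [hWri]
      have hs0 : (Real.sqrt (lam i) : ℂ) ≠ 0 := by
        simp [Real.sqrt_ne_zero'.mpr (lt_of_le_of_ne (hlam i) (Ne.symm hi))]
      field_simp
      rfl
  refine ⟨W * Vᴴ, ?_, ?_⟩
  · have h2 : (W * Vᴴ)ᴴ * (W * Vᴴ) = V * ((Wᴴ * W) * Vᴴ) := by
      rw [Matrix.conjTranspose_mul, Matrix.conjTranspose_conjTranspose]
      simp only [Matrix.mul_assoc]
    rw [h2, hW, Matrix.one_mul, hV2]
  · have hsq : (Matrix.posSemidef_conjTranspose_mul_self X).sqrt = V * Dsq * Vᴴ := rfl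
    calc X = (X * V) * Vᴴ := by rw [Matrix.mul_assoc, hV2, Matrix.mul_one]
      _ = W * Dsq * Vᴴ := by rw [hXV]
      _ = (W * Vᴴ) * (V * Dsq * Vᴴ) := by
          rw [show W * Vᴴ * (V * Dsq * Vᴴ) = W * ((Vᴴ * V) * (Dsq * Vᴴ)) by
            simp only [Matrix.mul_assoc], hV1, Matrix.one_mul, ← Matrix.mul_assoc]
      _ = (W * Vᴴ) * (Matrix.posSemidef_conjTranspose_mul_self X).sqrt := by rw [hsq]

lemma norm_trace_unitary_mul_le (X U : Mat n) (hU : Uᴴ * U = 1) :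
    ‖(U * X).trace‖ ≤ traceNorm X := by
  obtain ⟨U₀, hU₀, hX⟩ := exists_polar X
  have hPsd := (Matrix.posSemidef_conjTranspose_mul_self X).posSemidef_sqrt
  set P := (Matrix.posSemidef_conjTranspose_mul_self X).sqrt with hPdef
  set Q := hPsd.sqrt with hQdef
  have hQQ : Q * Q = P := hPsd.sqrt_mul_self
  have hQH : Qᴴ = Q := hPsd.posSemidef_sqrt.1
  have hU' : U * Uᴴ = 1 := mul_eq_one_comm.mp hU
  have hU₀' : U₀ * U₀ᴴ = 1 := mul_eq_one_comm.mp hU₀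
  set M := U * U₀ with hMdef
  have hMM : M * Mᴴ = 1 := by
    rw [hMdef, Matrix.conjTranspose_mul,
      show U * U₀ * (U₀ᴴ * Uᴴ) = U * ((U₀ * U₀ᴴ) * Uᴴ) by simp only [Matrix.mul_assoc],
      hU₀', Matrix.one_mul, hU']
  have htr : (U * X).trace = ((Mᴴ * Q)ᴴ * Q).trace := by
    rw [hX, ← Matrix.mul_assoc, ← hMdef, ← hQQ, Matrix.conjTranspose_mul,
      Matrix.conjTranspose_conjTranspose, hQH, ← Matrix.mul_assoc, Matrix.trace_mul_cycle]
  have hnQ : ‖toE Q‖ ^ 2 = traceNorm X := by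
    rw [norm_toE_sq, hQH, hQQ]
    rfl
  have hnMQ : ‖toE (Mᴴ * Q)‖ ^ 2 = traceNorm X := by
    rw [norm_toE_sq, Matrix.conjTranspose_mul, Matrix.conjTranspose_conjTranspose, hQH,
      show Q * M * (Mᴴ * Q) = Q * ((M * Mᴴ) * Q) by simp only [Matrix.mul_assoc],
      hMM, Matrix.one_mul, hQQ]
    rfl
  have hEq : ‖toE (Mᴴ * Q)‖ = ‖toE Q‖ := by
    nlinarith [norm_nonneg (toE Q), norm_nonneg (toE (Mᴴ * Q))]
  calc ‖(U * X).trace‖ = ‖⟪toE (Mᴴ * Q), toE Q⟫_ℂ‖ := by rw [htr, inner_toE]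
    _ ≤ ‖toE (Mᴴ * Q)‖ * ‖toE Q‖ := norm_inner_le_norm _ _
    _ = traceNorm X := by rw [hEq, ← sq, hnQ]

lemma traceNorm_nonneg (X : Mat n) : 0 ≤ traceNorm X :=
  le_trans (norm_nonneg _) (norm_trace_unitary_mul_le X 1 (by simp))

lemma exists_trace_eq_traceNorm (X : Mat n) :
    ∃ U : Mat n, Uᴴ * U = 1 ∧ (U * X).trace = (traceNorm X : ℂ) := by
  obtain ⟨U₀, hU₀, hX⟩ := exists_polar X
  have hU₀' : U₀ * U₀ᴴ = 1 := mul_eq_one_comm.mp hU₀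
  refine ⟨U₀ᴴ, by rw [Matrix.conjTranspose_conjTranspose]; exact hU₀', ?_⟩
  set P := (Matrix.posSemidef_conjTranspose_mul_self X).sqrt with hPdef
  have hPH : Pᴴ = P := (Matrix.posSemidef_conjTranspose_mul_self X).posSemidef_sqrt.1
  have hUX : U₀ᴴ * X = P := by rw [hX, ← Matrix.mul_assoc, hU₀, Matrix.one_mul]
  rw [hUX]
  have him : P.trace.im = 0 := by
    have h1 := Matrix.trace_conjTranspose P
    rw [hPH] at h1
    exact Complex.conj_eq_iff_im.mp (by rw [starRingEnd_apply]; exact h1.symm)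
  have : P.trace = ((P.trace.re : ℝ) : ℂ) := Complex.ext (by simp) (by simp [him])
  rw [this]
  rfl

lemma traceNorm_conjTranspose (X : Mat n) : traceNorm Xᴴ = traceNorm X := by
  have key : ∀ Z : Mat n, traceNorm Zᴴ ≤ traceNorm Z := by
    intro Z
    obtain ⟨U, hU, htr⟩ := exists_trace_eq_traceNorm Zᴴ
    have hU' : U * Uᴴ = 1 := mul_eq_one_comm.mp hU
    have h1 : ‖(U * Zᴴ).trace‖ = traceNorm Zᴴ := by
      rw [htr, Complex.norm_real, Real.norm_of_nonneg (traceNorm_nonneg _)]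
    have h2 : (U * Zᴴ).trace = star ((Uᴴ * Z).trace) := by
      rw [← Matrix.trace_conjTranspose, Matrix.conjTranspose_mul,
        Matrix.conjTranspose_conjTranspose, Matrix.trace_mul_comm]
    have h3 : ‖(U * Zᴴ).trace‖ ≤ traceNorm Z := by
      rw [h2, norm_star]
      exact norm_trace_unitary_mul_le Z Uᴴ
        (by rw [Matrix.conjTranspose_conjTranspose]; exact hU')
    linarith [h1 ▸ h3]
  refine le_antisymm (key X) ?_
  have h := key Xᴴ
  rwa [Matrix.conjTranspose_conjTranspose] at h

lemma my_arccos_le_arccos {u v : ℝ} (h : u ≤ v) : Real.arccos v ≤ Real.arccos u := by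
  unfold Real.arccos
  have := Real.monotone_arcsin h
  linarith

lemma inner_re_ge (x y z : EuclideanSpace ℂ (Fin n × Fin n)) (hx : ‖x‖ = 1) (hy : ‖y‖ = 1)
    (hz : ‖z‖ = 1) (c₁ c₂ : ℝ) (h₁ : ⟪x, y⟫_ℂ = (c₁ : ℂ)) (h₂ : ⟪y, z⟫_ℂ = (c₂ : ℂ)) :
    c₁ * c₂ - Real.sqrt (1 - c₁ ^ 2) * Real.sqrt (1 - c₂ ^ 2) ≤ (⟪x, z⟫_ℂ).re := by
  set x' := x - (c₁ : ℂ) • y with hx'def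
  set z' := z - (c₂ : ℂ) • y with hz'def
  have hyy : ⟪y, y⟫_ℂ = 1 := by
    rw [inner_self_eq_norm_sq_to_K, hy]; norm_num
  have hxx : ⟪x, x⟫_ℂ = 1 := by
    rw [inner_self_eq_norm_sq_to_K, hx]; norm_num
  have hzz : ⟪z, z⟫_ℂ = 1 := by
    rw [inner_self_eq_norm_sq_to_K, hz]; norm_num
  have hyx : ⟪y, x⟫_ℂ = (c₁ : ℂ) := by
    rw [← inner_conj_symm, h₁, Complex.conj_ofReal]
  have hzy : ⟪z, y⟫_ℂ = (c₂ : ℂ) := by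
    rw [← inner_conj_symm, h₂, Complex.conj_ofReal]
  have hx'z' : ⟪x', z'⟫_ℂ = ⟪x, z⟫_ℂ - ((c₁ * c₂ : ℝ) : ℂ) := by
    simp only [hx'def, hz'def, inner_sub_left, inner_sub_right, inner_smul_left,
      inner_smul_right, h₁, h₂, hyy, hyx, hxx, hzz, hzy, Complex.conj_ofReal, mul_one]
    push_cast
    ring
  have hx'x' : ⟪x', x'⟫_ℂ = ((1 - c₁ ^ 2 : ℝ) : ℂ) := by
    simp only [hx'def, hz'def, inner_sub_left, inner_sub_right, inner_smul_left,
      inner_smul_right, h₁, h₂, hyy, hyx, hxx, hzz, hzy, Complex.conj_ofReal, mul_one]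
    push_cast
    ring
  have hz'z' : ⟪z', z'⟫_ℂ = ((1 - c₂ ^ 2 : ℝ) : ℂ) := by
    simp only [hx'def, hz'def, inner_sub_left, inner_sub_right, inner_smul_left,
      inner_smul_right, h₁, h₂, hyy, hyx, hxx, hzz, hzy, Complex.conj_ofReal, mul_one]
    push_cast
    ring
  have hnx' : ‖x'‖ = Real.sqrt (1 - c₁ ^ 2) := by
    have h5 : ‖x'‖ ^ 2 = 1 - c₁ ^ 2 := by
      have h6 := inner_self_eq_norm_sq (𝕜 := ℂ) x'
      rw [hx'x'] at h6
      rw [← h6]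
      norm_num [← Complex.ofReal_pow]
    rw [← h5, Real.sqrt_sq (norm_nonneg _)]
  have hnz' : ‖z'‖ = Real.sqrt (1 - c₂ ^ 2) := by
    have h5 : ‖z'‖ ^ 2 = 1 - c₂ ^ 2 := by
      have h6 := inner_self_eq_norm_sq (𝕜 := ℂ) z'
      rw [hz'z'] at h6
      rw [← h6]
      norm_num [← Complex.ofReal_pow]
    rw [← h5, Real.sqrt_sq (norm_nonneg _)]
  have hcs : ‖⟪x', z'⟫_ℂ‖ ≤ ‖x'‖ * ‖z'‖ := norm_inner_le_norm _ _
  have habs : |(⟪x', z'⟫_ℂ).re| ≤ ‖⟪x', z'⟫_ℂ‖ := by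
    exact Complex.abs_re_le_norm _
  have hre : (⟪x', z'⟫_ℂ).re = (⟪x, z⟫_ℂ).re - c₁ * c₂ := by
    rw [hx'z', Complex.sub_re, Complex.ofReal_re]
  rw [hnx', hnz'] at hcs
  have := abs_le.mp (le_trans habs hcs)
  linarith [this.1]

end BuresAux

section FidLemmas

open BuresAux
open scoped InnerProductSpace

variable {n : ℕ} {A B C : Mat n}

lemma fid_nonneg (hA : A.PosSemidef) (hB : B.PosSemidef) : 0 ≤ fid hA hB :=
  traceNorm_nonneg _

lemma fid_symm (hA : A.PosSemidef) (hB : B.PosSemidef) : fid hA hB = fid hB hA := by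
  unfold fid
  rw [show (hA.sqrt * hB.sqrt) = (hB.sqrt * hA.sqrt)ᴴ by
    rw [Matrix.conjTranspose_mul, hA.posSemidef_sqrt.1, hB.posSemidef_sqrt.1],
    traceNorm_conjTranspose]

lemma norm_toE_sqrt (hB : B.PosSemidef) (htrB : B.trace = 1) : ‖toE hB.sqrt‖ = 1 :=
  norm_toE_eq_one (by rw [hB.posSemidef_sqrt.1, hB.sqrt_mul_self, htrB]; simp)

lemma norm_one_sqrt_mul (hA : A.PosSemidef) (htrA : A.trace = 1) (U : Mat n)
    (hU : Uᴴ * U = 1) : ‖toE (hA.sqrt * Uᴴ)‖ = 1 := by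
  apply norm_toE_eq_one
  have h1 : (hA.sqrt * Uᴴ)ᴴ * (hA.sqrt * Uᴴ) = U * (A * Uᴴ) := by
    rw [Matrix.conjTranspose_mul, Matrix.conjTranspose_conjTranspose, hA.posSemidef_sqrt.1,
      show U * hA.sqrt * (hA.sqrt * Uᴴ) = U * ((hA.sqrt * hA.sqrt) * Uᴴ) by
        simp only [Matrix.mul_assoc], hA.sqrt_mul_self]
  rw [h1, Matrix.trace_mul_comm, Matrix.mul_assoc, hU, Matrix.mul_one, htrA]
  simp

lemma norm_one_mul_sqrt (hC : C.PosSemidef) (htrC : C.trace = 1) (W : Mat n)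
    (hW' : W * Wᴴ = 1) : ‖toE (hC.sqrt * W)‖ = 1 := by
  apply norm_toE_eq_one
  have h1 : (hC.sqrt * W)ᴴ * (hC.sqrt * W) = Wᴴ * (C * W) := by
    rw [Matrix.conjTranspose_mul, hC.posSemidef_sqrt.1,
      show Wᴴ * hC.sqrt * (hC.sqrt * W) = Wᴴ * ((hC.sqrt * hC.sqrt) * W) by
        simp only [Matrix.mul_assoc], hC.sqrt_mul_self]
  rw [h1, Matrix.trace_mul_comm, Matrix.mul_assoc, hW', Matrix.mul_one, htrC]
  simp

lemma fid_exists (hA : A.PosSemidef) (hB : B.PosSemidef) :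
    ∃ U : Mat n, Uᴴ * U = 1 ∧
      ⟪toE (hA.sqrt * Uᴴ), toE hB.sqrt⟫_ℂ = ((fid hA hB : ℝ) : ℂ) := by
  obtain ⟨U, hU, htr⟩ := exists_trace_eq_traceNorm (hA.sqrt * hB.sqrt)
  refine ⟨U, hU, ?_⟩
  rw [inner_toE, Matrix.conjTranspose_mul, Matrix.conjTranspose_conjTranspose,
    hA.posSemidef_sqrt.1, Matrix.mul_assoc]
  exact htr

lemma fid_le_one (hA : A.PosSemidef) (hB : B.PosSemidef)
    (htrA : A.trace = 1) (htrB : B.trace = 1) : fid hA hB ≤ 1 := by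
  obtain ⟨U, hU, hip⟩ := fid_exists hA hB
  have h1 := norm_inner_le_norm (𝕜 := ℂ) (toE (hA.sqrt * Uᴴ)) (toE hB.sqrt)
  rw [hip, norm_one_sqrt_mul hA htrA U hU, norm_toE_sqrt hB htrB, Complex.norm_real] at h1
  calc fid hA hB ≤ |fid hA hB| := le_abs_self _
    _ ≤ 1 := by simpa using h1

lemma fid_eq_one_iff (hA : A.PosSemidef) (hB : B.PosSemidef)
    (htrA : A.trace = 1) (htrB : B.trace = 1) : fid hA hB = 1 ↔ A = B := by
  constructor
  · intro h1
    obtain ⟨U, hU, hip⟩ := fid_exists hA hB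
    rw [h1] at hip
    have heq := (inner_eq_one_iff_of_norm_eq_one (𝕜 := ℂ)
      (norm_one_sqrt_mul hA htrA U hU) (norm_toE_sqrt hB htrB)).mp (by simpa using hip)
    have hb : hA.sqrt * Uᴴ = hB.sqrt := toE_inj heq
    have hb2 : U * hA.sqrt = hB.sqrt := by
      have := congrArg Matrix.conjTranspose hb
      rwa [Matrix.conjTranspose_mul, Matrix.conjTranspose_conjTranspose,
        hA.posSemidef_sqrt.1, hB.posSemidef_sqrt.1] at this
    calc A = hA.sqrt * hA.sqrt := hA.sqrt_mul_self.symm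
      _ = hA.sqrt * (Uᴴ * U) * hA.sqrt := by rw [hU, Matrix.mul_one]
      _ = (hA.sqrt * Uᴴ) * (U * hA.sqrt) := by simp only [Matrix.mul_assoc]
      _ = hB.sqrt * hB.sqrt := by rw [hb, hb2]
      _ = B := hB.sqrt_mul_self
  · intro h
    subst h
    have hBA : hB = hA := Subsingleton.elim _ _
    subst hBA
    refine le_antisymm (fid_le_one hB hB htrA htrA) ?_
    have h1 := norm_trace_unitary_mul_le A 1 (by simp)
    rw [Matrix.one_mul, htrA, norm_one] at h1
    unfold fid
    rw [hB.sqrt_mul_self]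
    exact h1

end FidLemmas


open BuresAux
open scoped InnerProductSpace

theorem buresAngle_metric {n : ℕ} {A B C : Mat n}
    (hA : A.PosSemidef) (hB : B.PosSemidef) (hC : C.PosSemidef)
    (htrA : A.trace = 1) (htrB : B.trace = 1) (htrC : C.trace = 1) :
    buresAngle hA hB = buresAngle hB hA ∧
      buresAngle hA hC ≤ buresAngle hA hB + buresAngle hB hC ∧
        (buresAngle hA hB = 0 ↔ A = B) := by
  refine ⟨?_, ?_, ?_⟩
  · unfold buresAngle
    rw [fid_symm hA hB]
  · -- triangle inequality
    obtain ⟨U, hU, hipAB⟩ := fid_exists hA hB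
    obtain ⟨W, hW, htrW⟩ := exists_trace_eq_traceNorm (hB.sqrt * hC.sqrt)
    have hW' : W * Wᴴ = 1 := mul_eq_one_comm.mp hW
    set x := toE (hA.sqrt * Uᴴ) with hxdef
    set y := toE hB.sqrt with hydef
    set z := toE (hC.sqrt * W) with hzdef
    have hipBC : ⟪y, z⟫_ℂ = ((fid hB hC : ℝ) : ℂ) := by
      rw [hydef, hzdef, inner_toE, hB.posSemidef_sqrt.1, ← Matrix.mul_assoc,
        Matrix.trace_mul_comm]
      exact htrW
    have hWU : (W * U)ᴴ * (W * U) = 1 := by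
      rw [Matrix.conjTranspose_mul,
        show Uᴴ * Wᴴ * (W * U) = Uᴴ * ((Wᴴ * W) * U) by simp only [Matrix.mul_assoc],
        hW, Matrix.one_mul, hU]
    have hxz : ⟪x, z⟫_ℂ = ((W * U) * (hA.sqrt * hC.sqrt)).trace := by
      rw [hxdef, hzdef, inner_toE, Matrix.conjTranspose_mul,
        Matrix.conjTranspose_conjTranspose, hA.posSemidef_sqrt.1,
        show U * hA.sqrt * (hC.sqrt * W) = (U * (hA.sqrt * hC.sqrt)) * W by
          simp only [Matrix.mul_assoc],
        Matrix.trace_mul_comm, ← Matrix.mul_assoc]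
    have hbound : (⟪x, z⟫_ℂ).re ≤ fid hA hC := by
      have h6 := norm_trace_unitary_mul_le (hA.sqrt * hC.sqrt) (W * U) hWU
      have h7 : (⟪x, z⟫_ℂ).re ≤ ‖⟪x, z⟫_ℂ‖ := by
        exact Complex.re_le_norm _
      calc (⟪x, z⟫_ℂ).re ≤ ‖⟪x, z⟫_ℂ‖ := h7
        _ = ‖(W * U * (hA.sqrt * hC.sqrt)).trace‖ := by rw [hxz]
        _ ≤ traceNorm (hA.sqrt * hC.sqrt) := h6
        _ = fid hA hC := rfl
    have hnx : ‖x‖ = 1 := norm_one_sqrt_mul hA htrA U hU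
    have hny : ‖y‖ = 1 := norm_toE_sqrt hB htrB
    have hnz : ‖z‖ = 1 := norm_one_mul_sqrt hC htrC W hW'
    have hkey := inner_re_ge x y z hnx hny hnz (fid hA hB) (fid hB hC) hipAB hipBC
    have h0AB : 0 ≤ fid hA hB := fid_nonneg hA hB
    have h0BC : 0 ≤ fid hB hC := fid_nonneg hB hC
    have h1AB : fid hA hB ≤ 1 := fid_le_one hA hB htrA htrB
    have h1BC : fid hB hC ≤ 1 := fid_le_one hB hC htrB htrC
    unfold buresAngle
    set α := Real.arccos (fid hA hB) with hα
    set β := Real.arccos (fid hB hC) with hβ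
    have hcos : Real.cos (α + β) ≤ fid hA hC := by
      rw [Real.cos_add, hα, hβ, Real.cos_arccos (by linarith) h1AB,
        Real.cos_arccos (by linarith) h1BC, Real.sin_arccos, Real.sin_arccos]
      linarith
    have h8 : 0 ≤ α + β := add_nonneg (Real.arccos_nonneg _) (Real.arccos_nonneg _)
    have h9 : α + β ≤ Real.pi := by
      have hh1 : α ≤ Real.pi / 2 := Real.arccos_le_pi_div_two.mpr h0AB
      have hh2 : β ≤ Real.pi / 2 := Real.arccos_le_pi_div_two.mpr h0BC
      linarith
    calc Real.arccos (fid hA hC) ≤ Real.arccos (Real.cos (α + β)) :=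
          my_arccos_le_arccos hcos
      _ = α + β := Real.arccos_cos h8 h9
  · unfold buresAngle
    rw [Real.arccos_eq_zero]
    constructor
    · intro h
      exact (fid_eq_one_iff hA hB htrA htrB).mp
        (le_antisymm (fid_le_one hA hB htrA htrB) h)
    · intro h
      rw [(fid_eq_one_iff hA hB htrA htrB).mpr h]
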